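/- Let O ⊆ ℝ^d be open, let u : ℝ^d → ℝ be three times continuously differentiable on O, let σ > 0, and define y := u − σ L̄u on O. Then for every ε > 0 and every x ∈ O, φ(x)²/φ_ε(x) − σ L̄φ_ε(x) ≤ ‖∇y(x)‖. -/

import Mathlib

open Real MeasureTheory
open scoped BigOperators RealInnerProductSpace

/-- Partial derivative in the `i`-th coordinate direction. -/
noncomputable def pd {d : ℕ} (i : Fin d) (f : EuclideanSpace ℝ (Fin d) → ℝ)
    (x : EuclideanSpace ℝ (Fin d)) : ℝ :=
  fderiv ℝ f x (EuclideanSpace.single i 1)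

/-- The (Gaussian) Ornstein–Uhlenbeck operator `L̄f(x) = Δf(x) − ⟨x, ∇f(x)⟩`. -/
noncomputable def OU {d : ℕ} (f : EuclideanSpace ℝ (Fin d) → ℝ)
    (x : EuclideanSpace ℝ (Fin d)) : ℝ :=
  (∑ i, pd i (pd i f) x) - ⟪x, gradient f x⟫

/-- `φ(x) = ‖∇u(x)‖`. -/
noncomputable def phi {d : ℕ} (u : EuclideanSpace ℝ (Fin d) → ℝ)
    (x : EuclideanSpace ℝ (Fin d)) : ℝ :=
  ‖gradient u x‖

/-- `φ_ε(x) = √(ε² + ‖∇u(x)‖²)`. -/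
noncomputable def phiEps {d : ℕ} (ε : ℝ) (u : EuclideanSpace ℝ (Fin d) → ℝ)
    (x : EuclideanSpace ℝ (Fin d)) : ℝ :=
  Real.sqrt (ε ^ 2 + ‖gradient u x‖ ^ 2)

/-!
Write `v = ∇u` and `S = φ_ε(x)`. Two identities for `L̄` do the work. The chain rule
`L̄(Φ ∘ g) = Φ'(g) L̄g + Φ''(g) |∇g|²`, applied to `φ_ε = √(ε² + Σⱼ vⱼ²)`, gives the Bochner-type
formula `S L̄φ_ε = ⟨v, L̄v⟩ + |∇²u|² - |∇²u v|² / S²`; and the commutation `∂ⱼ L̄ = L̄ ∂ⱼ - ∂ⱼ`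
gives `∇y = (1 + σ) v - σ L̄v`. Substituting, the left-hand side becomes
`(⟨v, ∇y⟩ - σ |v|²) / S - σ (|∇²u|² - |∇²u v|² / S²) / S`. The second term is nonpositive by
Cauchy–Schwarz and `|v| ≤ S`, and the first is at most `|v| |∇y| / S ≤ |∇y|`.
-/

open Filter Topology

section

variable {d : ℕ} {f g : EuclideanSpace ℝ (Fin d) → ℝ} {x : EuclideanSpace ℝ (Fin d)}

lemma pd_eq_gradient (i : Fin d) (f : EuclideanSpace ℝ (Fin d) → ℝ)
    (x : EuclideanSpace ℝ (Fin d)) : pd i f x = gradient f x i := by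
  rw [pd, ← InnerProductSpace.toDual_symm_apply, EuclideanSpace.inner_single_right]
  simp [gradient]

lemma norm_gradient_sq (f : EuclideanSpace ℝ (Fin d) → ℝ) (x : EuclideanSpace ℝ (Fin d)) :
    ‖gradient f x‖ ^ 2 = ∑ i, pd i f x ^ 2 := by
  simp [EuclideanSpace.norm_sq_eq, pd_eq_gradient]

lemma OU_eq_sum (f : EuclideanSpace ℝ (Fin d) → ℝ) :
    OU f = fun x => ∑ i, (pd i (pd i f) x - x i * pd i f x) := by
  ext x
  rw [OU, PiLp.inner_apply, ← Finset.sum_sub_distrib]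
  simp [pd_eq_gradient, mul_comm]

lemma Filter.EventuallyEq.pd_eq (h : f =ᶠ[𝓝 x] g) (i : Fin d) : pd i f x = pd i g x := by
  rw [pd, pd, h.fderiv_eq]

lemma pd_const_add (c : ℝ) (f : EuclideanSpace ℝ (Fin d) → ℝ) (i : Fin d) :
    pd i (fun z => c + f z) = pd i f := by
  funext z
  rw [pd, pd, fderiv_const_add]

lemma pd_const_mul (hf : DifferentiableAt ℝ f x) (c : ℝ) (i : Fin d) :
    pd i (fun z => c * f z) x = c * pd i f x := by
  simp [pd, fderiv_const_mul hf]

lemma pd_sub (hf : DifferentiableAt ℝ f x) (hg : DifferentiableAt ℝ g x) (i : Fin d) :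
    pd i (fun z => f z - g z) x = pd i f x - pd i g x := by
  simp [pd, fderiv_fun_sub hf hg]

lemma pd_mul (hf : DifferentiableAt ℝ f x) (hg : DifferentiableAt ℝ g x) (i : Fin d) :
    pd i (fun z => f z * g z) x = f x * pd i g x + g x * pd i f x := by
  simp [pd, fderiv_fun_mul hf hg]

lemma pd_sum {ι : Type*} {s : Finset ι} {F : ι → EuclideanSpace ℝ (Fin d) → ℝ}
    (hF : ∀ k ∈ s, DifferentiableAt ℝ (F k) x) (i : Fin d) :
    pd i (fun z => ∑ k ∈ s, F k z) x = ∑ k ∈ s, pd i (F k) x := by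
  simp [pd, fderiv_fun_sum hF]

lemma pd_coord (i j : Fin d) (x : EuclideanSpace ℝ (Fin d)) :
    pd j (fun z : EuclideanSpace ℝ (Fin d) => z i) x = if i = j then 1 else 0 := by
  have : (fun z : EuclideanSpace ℝ (Fin d) => z i) = EuclideanSpace.proj i := rfl
  rw [pd, this, ContinuousLinearMap.fderiv]
  simp [PiLp.single_apply]

lemma pd_comp {Φ : ℝ → ℝ} {Φ' : ℝ} (hΦ : HasDerivAt Φ Φ' (g x)) (hg : DifferentiableAt ℝ g x)
    (i : Fin d) : pd i (fun z => Φ (g z)) x = Φ' * pd i g x := by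
  have h : HasFDerivAt (fun z => Φ (g z)) (Φ' • fderiv ℝ g x) x :=
    hΦ.comp_hasFDerivAt x hg.hasFDerivAt
  simp [pd, h.fderiv]

lemma ContDiffAt.contDiffAt_pd {n m : WithTop ℕ∞} (hf : ContDiffAt ℝ n f x) (hmn : m + 1 ≤ n)
    (i : Fin d) : ContDiffAt ℝ m (pd i f) x :=
  (hf.fderiv_right hmn).clm_apply contDiffAt_const

lemma ContDiffAt.differentiableAt_pd (hf : ContDiffAt ℝ 2 f x) (i : Fin d) :
    DifferentiableAt ℝ (pd i f) x :=
  (hf.contDiffAt_pd (m := 1) (by norm_num) i).differentiableAt one_ne_zero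

lemma ContDiffAt.eventually_differentiableAt (hf : ContDiffAt ℝ 2 f x) :
    ∀ᶠ z in 𝓝 x, DifferentiableAt ℝ f z :=
  (hf.eventually (by simp)).mono fun _ hz => hz.differentiableAt (by norm_num)

lemma pd_comm (hf : ContDiffAt ℝ 2 f x) (i j : Fin d) : pd i (pd j f) x = pd j (pd i f) x := by
  have hsymm := hf.isSymmSndFDerivAt (by simp [minSmoothness_of_isRCLikeNormedField])
  have hdf : DifferentiableAt ℝ (fderiv ℝ f) x :=
    (hf.fderiv_right le_rfl).differentiableAt one_ne_zero
  have hsnd : ∀ a b : Fin d, pd a (pd b f) x =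
      fderiv ℝ (fderiv ℝ f) x (EuclideanSpace.single a 1) (EuclideanSpace.single b 1) := by
    intro a b
    change fderiv ℝ (fun z => fderiv ℝ f z (EuclideanSpace.single b 1)) x _ = _
    simp [fderiv_clm_apply hdf (differentiableAt_const _)]
  rw [hsnd, hsnd, hsymm]

lemma pd_pd_pd_comm (hf : ContDiffAt ℝ 3 f x) (i j k : Fin d) :
    pd i (pd j (pd k f)) x = pd j (pd k (pd i f)) x := by
  have hcomm : pd i (pd k f) =ᶠ[𝓝 x] pd k (pd i f) :=
    ((hf.of_le (m := 2) (by norm_num)).eventually (by simp)).mono fun z hz => pd_comm hz i k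
  rw [pd_comm (hf.contDiffAt_pd (by norm_num) k) i j, hcomm.pd_eq]

lemma OU_const_add (c : ℝ) (f : EuclideanSpace ℝ (Fin d) → ℝ) :
    OU (fun z => c + f z) = OU f := by
  simp only [OU_eq_sum, pd_const_add]

lemma OU_sum {ι : Type*} [Fintype ι] {F : ι → EuclideanSpace ℝ (Fin d) → ℝ}
    (hF : ∀ k, ContDiffAt ℝ 2 (F k) x) : OU (fun z => ∑ k, F k z) x = ∑ k, OU (F k) x := by
  have hpd : ∀ i, pd i (fun z => ∑ k, F k z) =ᶠ[𝓝 x] fun z => ∑ k, pd i (F k) z := fun i => by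
    filter_upwards [eventually_all.2 fun k => (hF k).eventually_differentiableAt] with z hz
    exact pd_sum (fun k _ => hz k) i
  have hterm : ∀ i, pd i (pd i fun z => ∑ k, F k z) x = ∑ k, pd i (pd i (F k)) x := fun i => by
    rw [(hpd i).pd_eq, pd_sum fun k _ => (hF k).differentiableAt_pd i]
  simp only [OU_eq_sum, hterm, (hpd _).eq_of_nhds, Finset.mul_sum, ← Finset.sum_sub_distrib]
  exact Finset.sum_comm

lemma OU_comp {Φ Φ' : ℝ → ℝ} {Φ'' : ℝ} (hΦ : ∀ᶠ t in 𝓝 (g x), HasDerivAt Φ (Φ' t) t)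
    (hΦ' : HasDerivAt Φ' Φ'' (g x)) (hg : ContDiffAt ℝ 2 g x) :
    OU (fun z => Φ (g z)) x = Φ' (g x) * OU g x + Φ'' * ∑ i, pd i g x ^ 2 := by
  have hgx : DifferentiableAt ℝ g x := hg.differentiableAt (by norm_num)
  have hΦ'g : DifferentiableAt ℝ (fun z => Φ' (g z)) x := hΦ'.differentiableAt.comp x hgx
  have hpd : ∀ i, pd i (fun z => Φ (g z)) =ᶠ[𝓝 x] fun z => Φ' (g z) * pd i g z := fun i => by
    filter_upwards [hg.continuousAt.eventually hΦ, hg.eventually_differentiableAt]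
      with z hΦz hgz
    exact pd_comp hΦz hgz i
  have hterm : ∀ i, pd i (pd i fun z => Φ (g z)) x
      = Φ' (g x) * pd i (pd i g) x + Φ'' * pd i g x ^ 2 := fun i => by
    rw [(hpd i).pd_eq, pd_mul hΦ'g (hg.differentiableAt_pd i),
      pd_comp hΦ' hgx]
    ring
  simp only [OU_eq_sum, hterm, (hpd _).eq_of_nhds, Finset.mul_sum, ← Finset.sum_add_distrib]
  exact Finset.sum_congr rfl fun i _ => by ring

lemma OU_sq (hf : ContDiffAt ℝ 2 f x) :
    OU (fun z => f z ^ 2) x = 2 * f x * OU f x + 2 * ∑ i, pd i f x ^ 2 := by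
  have hsq : ∀ t : ℝ, HasDerivAt (fun t => t ^ 2) (2 * t) t := fun t => by
    simpa using hasDerivAt_pow 2 t
  simpa using OU_comp (Φ' := fun t => 2 * t) (Eventually.of_forall hsq)
    ((hasDerivAt_id (f x)).const_mul 2) hf

lemma OU_sqrt (hg : ContDiffAt ℝ 2 g x) (hgx : 0 < g x) :
    OU (fun z => √(g z)) x
      = OU g x / (2 * √(g x)) - (∑ i, pd i g x ^ 2) / (4 * √(g x) ^ 3) := by
  have hΦ : ∀ᶠ t in 𝓝 (g x), HasDerivAt Real.sqrt (2 * √t)⁻¹ t := by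
    filter_upwards [eventually_gt_nhds hgx] with t ht
    simpa using Real.hasDerivAt_sqrt ht.ne'
  have hΦ' := ((Real.hasDerivAt_sqrt hgx.ne').const_mul 2).fun_inv (by positivity)
  rw [OU_comp hΦ hΦ' hg]
  have hs : √(g x) ≠ 0 := by positivity
  field_simp
  ring

lemma OU_sqrt_add_sum_sq {ι : Type*} [Fintype ι] {v : ι → EuclideanSpace ℝ (Fin d) → ℝ}
    (hv : ∀ k, ContDiffAt ℝ 2 (v k) x) {ε : ℝ} (hε : ε ≠ 0) :
    OU (fun z => √(ε ^ 2 + ∑ k, v k z ^ 2)) x =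
      (∑ k, (v k x * OU (v k) x + ∑ i, pd i (v k) x ^ 2)) / √(ε ^ 2 + ∑ k, v k x ^ 2)
        - (∑ i, (∑ k, v k x * pd i (v k) x) ^ 2) / √(ε ^ 2 + ∑ k, v k x ^ 2) ^ 3 := by
  have hvx : ∀ k, DifferentiableAt ℝ (v k) x := fun k => (hv k).differentiableAt (by norm_num)
  have hOU : OU (fun z => ε ^ 2 + ∑ k, v k z ^ 2) x
      = 2 * ∑ k, (v k x * OU (v k) x + ∑ i, pd i (v k) x ^ 2) := by
    rw [OU_const_add, OU_sum (F := fun k z => v k z ^ 2) fun k => (hv k).pow 2, Finset.mul_sum]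
    exact Finset.sum_congr rfl fun k _ => by rw [OU_sq (hv k)]; ring
  have hpd : ∀ i, pd i (fun z => ε ^ 2 + ∑ k, v k z ^ 2) x
      = 2 * ∑ k, v k x * pd i (v k) x := fun i => by
    rw [pd_const_add, pd_sum (F := fun k z => v k z ^ 2) fun k _ => (hvx k).pow 2,
      Finset.mul_sum]
    refine Finset.sum_congr rfl fun k _ => ?_
    rw [pd_comp (Φ := fun t => t ^ 2) (by simpa using hasDerivAt_pow 2 (v k x)) (hvx k) i]
    ring
  rw [OU_sqrt (contDiffAt_const.add (ContDiffAt.sum fun k _ => (hv k).pow 2)) (by positivity),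
    hOU]
  simp only [hpd, mul_pow, ← Finset.mul_sum]
  have hs : √(ε ^ 2 + ∑ k, v k x ^ 2) ≠ 0 := by positivity
  field_simp
  ring

lemma differentiableAt_OU (hf : ContDiffAt ℝ 3 f x) : DifferentiableAt ℝ (OU f) x := by
  have hf2 : ContDiffAt ℝ 2 f x := hf.of_le (by norm_num)
  have h1 : ∀ i, DifferentiableAt ℝ (pd i f) x := hf2.differentiableAt_pd
  have h2 : ∀ i, DifferentiableAt ℝ (pd i (pd i f)) x := fun i =>
    (hf.contDiffAt_pd (m := 2) (by norm_num) i).differentiableAt_pd i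
  rw [OU_eq_sum]
  fun_prop

lemma pd_OU (hf : ContDiffAt ℝ 3 f x) (j : Fin d) :
    pd j (OU f) x = OU (pd j f) x - pd j f x := by
  have hf2 : ContDiffAt ℝ 2 f x := hf.of_le (by norm_num)
  have h1 : ∀ i, DifferentiableAt ℝ (pd i f) x := hf2.differentiableAt_pd
  have h2 : ∀ i, DifferentiableAt ℝ (pd i (pd i f)) x := fun i =>
    (hf.contDiffAt_pd (m := 2) (by norm_num) i).differentiableAt_pd i
  have hcoord : ∀ i, DifferentiableAt ℝ (fun z : EuclideanSpace ℝ (Fin d) => z i) x := by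
    fun_prop
  have hterm : ∀ i, pd j (fun z => pd i (pd i f) z - z i * pd i f z) x
      = pd i (pd i (pd j f)) x - x i * pd i (pd j f) x - if i = j then pd i f x else 0 := by
    intro i
    rw [pd_sub (h2 i) ((hcoord i).fun_mul (h1 i)), pd_mul (hcoord i) (h1 i), pd_coord,
      pd_pd_pd_comm hf j i i, pd_comm hf2 j i]
    split_ifs <;> ring
  rw [OU_eq_sum, pd_sum (F := fun i z => pd i (pd i f) z - z i * pd i f z)
    (fun i _ => (h2 i).sub ((hcoord i).fun_mul (h1 i))), OU_eq_sum]
  simp only [hterm, Finset.sum_sub_distrib, Finset.sum_ite_eq', Finset.mem_univ, if_true]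

lemma pd_sub_mul_OU (hf : ContDiffAt ℝ 3 f x) (c : ℝ) (j : Fin d) :
    pd j (fun z => f z - c * OU f z) x = (1 + c) * pd j f x - c * OU (pd j f) x := by
  rw [pd_sub (hf.differentiableAt (by norm_num)) ((differentiableAt_OU hf).const_mul c),
    pd_const_mul (differentiableAt_OU hf), pd_OU hf]
  ring

end

lemma sum_sq_sum_mul_le {ι κ : Type*} [Fintype ι] [Fintype κ] (a : ι → ℝ) (H : κ → ι → ℝ) :
    ∑ i, (∑ k, a k * H i k) ^ 2 ≤ (∑ k, a k ^ 2) * ∑ k, ∑ i, H i k ^ 2 := by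
  rw [Finset.sum_comm (f := fun k i => H i k ^ 2), Finset.mul_sum]
  exact Finset.sum_le_sum fun i _ => Finset.sum_mul_sq_le_sq_mul_sq _ _ _

/-- The estimate at a point, with `a = ∇u(x)`, `L = L̄(∇u)(x)`, `H = ∇²u(x)` and `S = φ_ε(x)`. -/
lemma sq_div_sub_mul_le {ι κ : Type*} [Fintype ι] [Fintype κ] (a L : ι → ℝ) (H : κ → ι → ℝ)
    {σ S : ℝ} (hσ : 0 ≤ σ) (hS : 0 < S) (haS : ∑ k, a k ^ 2 ≤ S ^ 2) :
    (∑ k, a k ^ 2) / S - σ * ((∑ k, (a k * L k + ∑ i, H i k ^ 2)) / S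
        - (∑ i, (∑ k, a k * H i k) ^ 2) / S ^ 3)
      ≤ √(∑ k, ((1 + σ) * a k - σ * L k) ^ 2) := by
  set b := fun k => (1 + σ) * a k - σ * L k
  set A := ∑ k, a k ^ 2
  set P := ∑ k, ∑ i, H i k ^ 2
  set R := ∑ i, (∑ k, a k * H i k) ^ 2
  set B := ∑ k, a k * b k
  have hsplit : σ * ∑ k, (a k * L k + ∑ i, H i k ^ 2) = (1 + σ) * A - B + σ * P := by
    have hL : σ * ∑ k, a k * L k = (1 + σ) * A - B := by
      simp only [B, A, b, Finset.mul_sum, ← Finset.sum_sub_distrib]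
      exact Finset.sum_congr rfl fun k _ => by ring
    rw [Finset.sum_add_distrib, mul_add, hL]
  have hRP : R / S ^ 3 ≤ P / S := by
    rw [div_le_div_iff₀ (by positivity) hS]
    have : R ≤ S ^ 2 * P := (sum_sq_sum_mul_le a H).trans (by gcongr)
    nlinarith
  have hA : 0 ≤ A := Finset.sum_nonneg fun k _ => sq_nonneg _
  have hB : B ≤ √A * √(∑ k, b k ^ 2) := Real.sum_mul_le_sqrt_mul_sqrt _ _ _
  have hAS : √A ≤ S := (Real.sqrt_le_left hS.le).2 haS
  calc A / S - σ * ((∑ k, (a k * L k + ∑ i, H i k ^ 2)) / S - R / S ^ 3)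
      = (B - σ * A) / S - σ * (P / S - R / S ^ 3) := by
        rw [mul_sub, ← mul_div_assoc, hsplit]
        ring
    _ ≤ B / S := by
        have h1 : (B - σ * A) / S ≤ B / S := by gcongr; linarith [mul_nonneg hσ hA]
        linarith [mul_nonneg hσ (sub_nonneg.2 hRP)]
    _ ≤ √A * √(∑ k, b k ^ 2) / S := by gcongr
    _ ≤ √(∑ k, b k ^ 2) := by
        rw [div_le_iff₀ hS, mul_comm (√(∑ k, b k ^ 2))]
        gcongr

theorem phiEps_ou_key_inequality {d : ℕ} (O : Set (EuclideanSpace ℝ (Fin d)))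
    (hO : IsOpen O) (u : EuclideanSpace ℝ (Fin d) → ℝ) (hu : ContDiffOn ℝ 3 u O)
    (σ : ℝ) (hσ : 0 < σ) (y : EuclideanSpace ℝ (Fin d) → ℝ)
    (hy : ∀ x ∈ O, y x = u x - σ * OU u x) (ε : ℝ) (hε : 0 < ε) :
    ∀ x ∈ O,
      (phi u x) ^ 2 / phiEps ε u x - σ * OU (phiEps ε u) x ≤ ‖gradient y x‖ := by
  intro x hx
  have hux : ContDiffAt ℝ 3 u x := hu.contDiffAt (hO.mem_nhds hx)
  have hpd_y : ∀ j, pd j y x = (1 + σ) * pd j u x - σ * OU (pd j u) x := fun j => by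
    rw [← pd_sub_mul_OU hux σ j]
    exact EventuallyEq.pd_eq (eventually_of_mem (hO.mem_nhds hx) hy) j
  have hphiEps : phiEps ε u = fun z => √(ε ^ 2 + ∑ j, pd j u z ^ 2) := by
    funext z
    rw [phiEps, norm_gradient_sq]
  have hgrad_y : ‖gradient y x‖ = √(∑ j, pd j y x ^ 2) := by
    rw [← norm_gradient_sq, Real.sqrt_sq (norm_nonneg _)]
  rw [phi, norm_gradient_sq, hgrad_y, hphiEps,
    OU_sqrt_add_sum_sq (fun j => hux.contDiffAt_pd (by norm_num) j) hε.ne']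
  simp only [hpd_y]
  exact sq_div_sub_mul_le _ _ _ hσ.le (by positivity)
    (by rw [Real.sq_sqrt (by positivity)]; linarith [sq_nonneg ε])
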